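/- arXiv:2605.22596 — 2 statements merged into one kernel-verified Lean document; each statement's English description precedes it below -/
import Mathlib

section
/- Let g : ℝⁿ → ℝ be twice continuously differentiable with |g(x)| ≤ G for all x and with the operator norm of its Hessian bounded by M everywhere, for constants G ≥ 0, M > 0. Then the gradient satisfies ‖∇g(x)‖ ≤ 2√(G·M) for every x. -/
/-!
Restrict `g` to the line `t ↦ x + t • u` through `x` in a unit direction `u`. The Hessian bound
makes the derivative `M`-Lipschitz, so `g` lies above its tangent line up to `M t² / 2`; with
`|g| ≤ G` this gives `t · Dg(x) u ≤ 2G + M t² / 2` for every `t > 0`, and the optimal choice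
`t = 2 √(G / M)` yields `Dg(x) u ≤ 2 √(G M)`.
-/

open Set

-- Testing with `t = 2 (√(GM) + ε) / M` instead of `2 √(G / M)` avoids a case split on `G = 0`.
lemma le_two_sqrt_mul_of_forall_mul_le {a G M : ℝ} (hG : 0 ≤ G) (hM : 0 < M)
    (h : ∀ t, 0 < t → a * t ≤ 2 * G + M / 2 * t ^ 2) : a ≤ 2 * Real.sqrt (G * M) := by
  set s := Real.sqrt (G * M)
  have hs : 0 ≤ s := Real.sqrt_nonneg _
  have hs2 : s ^ 2 = G * M := Real.sq_sqrt (by positivity)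
  refine le_of_forall_pos_le_add fun ε hε => ?_
  have ht := h (2 * (s + ε) / M) (by positivity)
  have hscaled : a * (s + ε) ≤ s ^ 2 + (s + ε) ^ 2 := by
    rw [hs2]
    have := mul_le_mul_of_nonneg_left ht hM.le
    field_simp at this
    nlinarith
  nlinarith

section LipschitzDerivative

variable {E : Type*} [NormedAddCommGroup E] [NormedSpace ℝ E]

lemma norm_fderiv_sub_fderiv_le_of_norm_iteratedFDeriv_two_le {F : Type*} [NormedAddCommGroup F]
    [NormedSpace ℝ F] {f : E → F} {M : ℝ} (hf : ContDiff ℝ 2 f)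
    (hM : ∀ x, ‖iteratedFDeriv ℝ 2 f x‖ ≤ M) (y z : E) :
    ‖fderiv ℝ f y - fderiv ℝ f z‖ ≤ M * ‖y - z‖ := by
  have hdf : Differentiable ℝ (fderiv ℝ f) :=
    (hf.fderiv_right (m := 1) le_rfl).differentiable one_ne_zero
  refine convex_univ.norm_image_sub_le_of_norm_fderiv_le (fun w _ => hdf w) (fun w _ => ?_)
    trivial trivial
  calc ‖fderiv ℝ (fderiv ℝ f) w‖
      = ‖iteratedFDeriv ℝ 0 (fderiv ℝ (fderiv ℝ f)) w‖ := by rw [norm_iteratedFDeriv_zero]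
    _ = ‖iteratedFDeriv ℝ 1 (fderiv ℝ f) w‖ := norm_iteratedFDeriv_fderiv
    _ = ‖iteratedFDeriv ℝ 2 f w‖ := norm_iteratedFDeriv_fderiv
    _ ≤ M := hM w

variable {f : E → ℝ} {M : ℝ}

lemma fderiv_apply_le_of_lipschitz_fderiv (hf : Differentiable ℝ f)
    (hlip : ∀ y z, ‖fderiv ℝ f y - fderiv ℝ f z‖ ≤ M * ‖y - z‖) (x v : E) :
    fderiv ℝ f x v ≤ f (x + v) - f x + M / 2 * ‖v‖ ^ 2 := by
  set L := fderiv ℝ f x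
  set F : ℝ → ℝ := fun t => f x + t * L v - f (x + t • v)
  have hF : ∀ t, HasDerivAt F (L v - fderiv ℝ f (x + t • v) v) t := by
    intro t
    have hline : HasDerivAt (fun t : ℝ => x + t • v) v t := by
      simpa using ((hasDerivAt_id t).smul_const v).const_add x
    exact ((hasDerivAt_mul_const (L v)).const_add (f x)).sub
      ((hf _).hasFDerivAt.comp_hasDerivAt t hline)
  have hB : ∀ t, HasDerivAt (fun t : ℝ => M / 2 * ‖v‖ ^ 2 * t ^ 2) (M * ‖v‖ ^ 2 * t) t := by
    intro t
    exact ((hasDerivAt_pow 2 t).const_mul _).congr_deriv (by push_cast; ring)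
  have hF' : ∀ t, 0 ≤ t → L v - fderiv ℝ f (x + t • v) v ≤ M * ‖v‖ ^ 2 * t := by
    intro t ht
    calc L v - fderiv ℝ f (x + t • v) v = (L - fderiv ℝ f (x + t • v)) v := rfl
      _ ≤ ‖L - fderiv ℝ f (x + t • v)‖ * ‖v‖ := (Real.le_norm_self _).trans (ContinuousLinearMap.le_opNorm _ v)
      _ ≤ M * ‖x - (x + t • v)‖ * ‖v‖ := by gcongr; exact hlip _ _
      _ = M * ‖v‖ ^ 2 * t := by
        rw [sub_add_cancel_left, norm_neg, norm_smul, Real.norm_of_nonneg ht]; ring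
  have hF1 : F 1 ≤ M / 2 * ‖v‖ ^ 2 * 1 ^ 2 :=
    image_le_of_deriv_right_le_deriv_boundary (fun t _ => (hF t).continuousAt.continuousWithinAt)
      (fun t _ => (hF t).hasDerivWithinAt) (by simp [F]) (by fun_prop)
      (fun t _ => (hB t).hasDerivWithinAt) (fun t ht => hF' t ht.1) (right_mem_Icc.2 zero_le_one)
  simp only [F, one_mul, one_smul, one_pow, mul_one] at hF1
  linarith

lemma fderiv_apply_le_two_sqrt_mul (hf : Differentiable ℝ f)
    (hlip : ∀ y z, ‖fderiv ℝ f y - fderiv ℝ f z‖ ≤ M * ‖y - z‖) {G : ℝ} (hG : 0 ≤ G) (hM : 0 < M)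
    (hbound : ∀ x, |f x| ≤ G) (x : E) {u : E} (hu : ‖u‖ = 1) :
    fderiv ℝ f x u ≤ 2 * Real.sqrt (G * M) := by
  refine le_two_sqrt_mul_of_forall_mul_le hG hM fun t ht => ?_
  have htaylor := fderiv_apply_le_of_lipschitz_fderiv hf hlip x (t • u)
  rw [map_smul, smul_eq_mul, norm_smul, hu, Real.norm_of_nonneg ht.le] at htaylor
  have hx := abs_le.1 (hbound x)
  have hxt := abs_le.1 (hbound (x + t • u))
  linarith

lemma norm_fderiv_le_two_sqrt_mul (hf : Differentiable ℝ f)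
    (hlip : ∀ y z, ‖fderiv ℝ f y - fderiv ℝ f z‖ ≤ M * ‖y - z‖) {G : ℝ} (hG : 0 ≤ G) (hM : 0 < M)
    (hbound : ∀ x, |f x| ≤ G) (x : E) :
    ‖fderiv ℝ f x‖ ≤ 2 * Real.sqrt (G * M) := by
  refine ContinuousLinearMap.opNorm_le_of_unit_norm (by positivity) fun u hu => ?_
  rw [Real.norm_eq_abs, abs_le]
  refine ⟨?_, fderiv_apply_le_two_sqrt_mul hf hlip hG hM hbound x hu⟩
  have hneg := fderiv_apply_le_two_sqrt_mul hf hlip hG hM hbound x (u := -u) (by rwa [norm_neg])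
  rw [map_neg] at hneg
  linarith

end LipschitzDerivative

theorem stmt0 {n : ℕ} (g : EuclideanSpace ℝ (Fin n) → ℝ) (G M : ℝ)
    (hG : 0 ≤ G) (hM : 0 < M)
    (hg : ContDiff ℝ 2 g)
    (hbound : ∀ x, |g x| ≤ G)
    (hHess : ∀ x, ‖iteratedFDeriv ℝ 2 g x‖ ≤ M) :
    ∀ x, ‖gradient g x‖ ≤ 2 * Real.sqrt (G * M) := by
  intro x
  rw [gradient, LinearIsometryEquiv.norm_map]
  exact norm_fderiv_le_two_sqrt_mul (hg.differentiable two_ne_zero)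
    (norm_fderiv_sub_fderiv_le_of_norm_iteratedFDeriv_two_le hg hHess) hG hM hbound x
end

section
/- Let p be a positive joint density over (a, z₁,…,z_K) with a ∈ ℝⁿ, twice differentiable in a. Suppose the interaction log-ratio g(z, a) = log(p(z|a)/∏ᵢ p(zᵢ|a)) satisfies |g(z, a)| ≤ G and ‖∇_a² g(z, a)‖_op ≤ M for all (z, a). Then for all (z, a), ‖∇_a log p(a|z) − s_comp(a, z)‖ ≤ 2√(G·M), where s_comp(a,z) = ∇_a log p(a) + Σᵢ (∇_a log p(a|zᵢ) − ∇_a log p(a)). -/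
noncomputable def interactionLogRatio {n K : ℕ} {Z : Fin K → Type*}
    [∀ i, Fintype (Z i)] [∀ i, DecidableEq (Z i)]
    (p : EuclideanSpace ℝ (Fin n) → (∀ i, Z i) → ℝ)
    (z : ∀ i, Z i) (a : EuclideanSpace ℝ (Fin n)) : ℝ :=
  Real.log ((p a z / ∑ z', p a z') /
    ∏ i, ((∑ z' ∈ Finset.univ.filter (fun z'' => z'' i = z i), p a z') /
      ∑ z', p a z'))

/-!
Bayes' rule writes every score as the `a`-gradient of a log-joint minus a log-marginal, so the gap
between the true score and the composed score is exactly `∇ₐ g` for the interaction log-ratio `g`.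
A bounded function with bounded Hessian has bounded gradient (Landau's inequality): Taylor
expansions at `a ± v` give `‖Dg(a) v‖ ≤ G + M ‖v‖²`, and optimizing over `‖v‖ = t` yields `2√(GM)`.
-/

lemma le_two_mul_sqrt_of_forall_mul_le {x G M : ℝ} (h : ∀ t, 0 ≤ t → x * t ≤ G + M * t ^ 2) :
    x ≤ 2 * √(G * M) := by
  rcases le_or_gt x 0 with hx | hx
  · exact hx.trans (by positivity)
  have hG : 0 ≤ G := by simpa using h 0 le_rfl
  have hM : 0 < M := by
    by_contra! hM
    have hlarge := h ((G + 1) / x) (by positivity)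
    rw [mul_div_cancel₀ _ hx.ne'] at hlarge
    nlinarith [sq_nonneg ((G + 1) / x)]
  -- the optimal step length `t = x / (2M)`
  have hopt := h (x / (2 * M)) (by positivity)
  have hsq : (x / 2) ^ 2 ≤ G * M := by
    field_simp at hopt
    nlinarith
  linarith [Real.le_sqrt_of_sq_le hsq]

section Landau

open Metric

variable {E F : Type*} [NormedAddCommGroup E] [NormedSpace ℝ E]
  [NormedAddCommGroup F] [NormedSpace ℝ F] {f : E → F} {G M : ℝ}

theorem norm_sub_sub_fderiv_apply_le (hf : Differentiable ℝ f)
    (hf' : Differentiable ℝ (fderiv ℝ f)) (hM : ∀ x, ‖fderiv ℝ (fderiv ℝ f) x‖ ≤ M) (a v : E) :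
    ‖f (a + v) - f a - fderiv ℝ f a v‖ ≤ M * ‖v‖ ^ 2 := by
  have hball : ∀ x ∈ closedBall a ‖v‖, ‖fderiv ℝ f x - fderiv ℝ f a‖ ≤ M * ‖v‖ := by
    intro x hx
    calc ‖fderiv ℝ f x - fderiv ℝ f a‖ ≤ M * ‖x - a‖ :=
          convex_univ.norm_image_sub_le_of_norm_fderiv_le (fun u _ => hf' u) (fun u _ => hM u)
            trivial trivial
      _ ≤ M * ‖v‖ := by
          gcongr
          · exact (norm_nonneg (fderiv ℝ (fderiv ℝ f) a)).trans (hM a)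
          · rwa [mem_closedBall, dist_eq_norm] at hx
  have hav : a + v ∈ closedBall a ‖v‖ := by simp [mem_closedBall, dist_eq_norm]
  simpa [sq, mul_assoc] using (convex_closedBall a ‖v‖).norm_image_sub_le_of_norm_fderiv_le'
    (fun x _ => hf x) hball (mem_closedBall_self (norm_nonneg v)) hav

theorem norm_fderiv_apply_le_of_norm_le (hf : Differentiable ℝ f)
    (hf' : Differentiable ℝ (fderiv ℝ f)) (hG : ∀ x, ‖f x‖ ≤ G)
    (hM : ∀ x, ‖fderiv ℝ (fderiv ℝ f) x‖ ≤ M) (a v : E) :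
    ‖fderiv ℝ f a v‖ ≤ G + M * ‖v‖ ^ 2 := by
  have hplus := norm_sub_sub_fderiv_apply_le hf hf' hM a v
  have hminus := norm_sub_sub_fderiv_apply_le hf hf' hM a (-v)
  rw [map_neg, norm_neg] at hminus
  have hsplit : (2 : ℝ) • fderiv ℝ f a v = (f (a + v) - f (a + -v))
      - (f (a + v) - f a - fderiv ℝ f a v) + (f (a + -v) - f a - -fderiv ℝ f a v) := by
    rw [two_smul]; abel
  have hdiff : ‖f (a + v) - f (a + -v)‖ ≤ 2 * G := by
    linarith [norm_sub_le (f (a + v)) (f (a + -v)), hG (a + v), hG (a + -v)]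
  have htwice : 2 * ‖fderiv ℝ f a v‖ ≤ 2 * G + 2 * (M * ‖v‖ ^ 2) := by
    calc 2 * ‖fderiv ℝ f a v‖ = ‖(2 : ℝ) • fderiv ℝ f a v‖ := by rw [norm_smul, Real.norm_two]
      _ ≤ ‖f (a + v) - f (a + -v)‖ + ‖f (a + v) - f a - fderiv ℝ f a v‖
          + ‖f (a + -v) - f a - -fderiv ℝ f a v‖ := by
        rw [hsplit]; exact (norm_add_le _ _).trans (by gcongr; exact norm_sub_le _ _)
      _ ≤ 2 * G + 2 * (M * ‖v‖ ^ 2) := by linarith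
  linarith

theorem norm_fderiv_le_two_mul_sqrt (hf : Differentiable ℝ f)
    (hf' : Differentiable ℝ (fderiv ℝ f)) (hG : ∀ x, ‖f x‖ ≤ G)
    (hM : ∀ x, ‖fderiv ℝ (fderiv ℝ f) x‖ ≤ M) (a : E) :
    ‖fderiv ℝ f a‖ ≤ 2 * √(G * M) :=
  ContinuousLinearMap.opNorm_le_of_unit_norm (by positivity) fun u hu =>
    le_two_mul_sqrt_of_forall_mul_le fun t ht => by
      have := norm_fderiv_apply_le_of_norm_le hf hf' hG hM a (t • u)
      rwa [map_smul, norm_smul, norm_smul, hu, Real.norm_of_nonneg ht, mul_one, mul_comm] at this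

theorem ContDiff.norm_fderiv_le_two_mul_sqrt (hf : ContDiff ℝ 2 f) (hG : ∀ x, ‖f x‖ ≤ G)
    (hM : ∀ x, ‖iteratedFDeriv ℝ 2 f x‖ ≤ M) (a : E) :
    ‖fderiv ℝ f a‖ ≤ 2 * √(G * M) := by
  refine _root_.norm_fderiv_le_two_mul_sqrt (hf.differentiable two_ne_zero)
    ((hf.fderiv_right (m := 1) le_rfl).differentiable one_ne_zero) hG (fun x => ?_) a
  rw [← norm_iteratedFDeriv_one, norm_iteratedFDeriv_fderiv]
  exact hM x

end Landau

section Gradient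

variable {𝕜 E ι : Type*} [RCLike 𝕜] [NormedAddCommGroup E] [InnerProductSpace 𝕜 E]
  [CompleteSpace E] {f g : E → 𝕜} {x : E}

theorem norm_gradient : ‖gradient f x‖ = ‖fderiv 𝕜 f x‖ :=
  (InnerProductSpace.toDual 𝕜 E).symm.norm_map _

theorem gradient_fun_sub (hf : DifferentiableAt 𝕜 f x) (hg : DifferentiableAt 𝕜 g x) :
    gradient (fun y => f y - g y) x = gradient f x - gradient g x := by
  simp only [gradient, fderiv_fun_sub hf hg, map_sub]

theorem gradient_fun_sum {s : Finset ι} {h : ι → E → 𝕜}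
    (hh : ∀ i ∈ s, DifferentiableAt 𝕜 (h i) x) :
    gradient (fun y => ∑ i ∈ s, h i y) x = ∑ i ∈ s, gradient (h i) x := by
  simp only [gradient, fderiv_fun_sum hh, map_sum]

end Gradient

theorem differentiable_log_sum_of_pos {ι E : Type*} [NormedAddCommGroup E] [NormedSpace ℝ E]
    {f : ι → E → ℝ} {s : Finset ι} (hf : ∀ i ∈ s, Differentiable ℝ (f i))
    (hpos : ∀ i ∈ s, ∀ x, 0 < f i x) (hs : s.Nonempty) :
    Differentiable ℝ (fun x => Real.log (∑ i ∈ s, f i x)) := fun x =>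
  (DifferentiableAt.fun_sum fun i hi => hf i hi x).log
    (Finset.sum_pos (fun i hi => hpos i hi x) hs).ne'

section Decomposition

open Real

variable {n K : ℕ} {Z : Fin K → Type*} [∀ i, Fintype (Z i)] [∀ i, DecidableEq (Z i)]
  (p : EuclideanSpace ℝ (Fin n) → (∀ i, Z i) → ℝ)

theorem interactionLogRatio_eq_log_sub (hpos : ∀ a z, 0 < p a z) (z : ∀ i, Z i) :
    interactionLogRatio p z = fun a => log (p a z) - log (∑ z', p a z')
      - ∑ i, (log (∑ z' ∈ Finset.univ.filter (fun z'' => z'' i = z i), p a z')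
        - log (∑ z', p a z')) := by
  funext a
  have hS : 0 < ∑ z', p a z' := Finset.sum_pos (fun _ _ => hpos a _) ⟨z, Finset.mem_univ z⟩
  have hm : ∀ i, 0 < ∑ z' ∈ Finset.univ.filter (fun z'' => z'' i = z i), p a z' :=
    fun i => Finset.sum_pos (fun _ _ => hpos a _) ⟨z, by simp⟩
  rw [interactionLogRatio, log_div (div_pos (hpos a z) hS).ne'
      (Finset.prod_pos fun i _ => div_pos (hm i) hS).ne',
    log_div (hpos a z).ne' hS.ne', log_prod fun i _ => (div_pos (hm i) hS).ne']
  simp only [log_div (hm _).ne' hS.ne']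

end Decomposition

theorem stmt16_general {n K : ℕ} {Z : Fin K → Type*}
    [∀ i, Fintype (Z i)] [∀ i, DecidableEq (Z i)]
    (p : EuclideanSpace ℝ (Fin n) → (∀ i, Z i) → ℝ)
    (hpos : ∀ a z, 0 < p a z)
    (hdiff : ∀ z, ContDiff ℝ 2 (fun a => p a z))
    (G M : ℝ)
    (hg2 : ∀ z, ContDiff ℝ 2 (interactionLogRatio p z))
    (hgb : ∀ z a, |interactionLogRatio p z a| ≤ G)
    (hHess : ∀ z a, ‖iteratedFDeriv ℝ 2 (interactionLogRatio p z) a‖ ≤ M) :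
    ∀ (z : ∀ i, Z i) (a : EuclideanSpace ℝ (Fin n)),
      ‖gradient (fun a => Real.log (p a z)) a
        - (gradient (fun a => Real.log (∑ z', p a z')) a
           + ∑ i, (gradient (fun a =>
                Real.log (∑ z' ∈ Finset.univ.filter (fun z'' => z'' i = z i),
                  p a z')) a
              - gradient (fun a => Real.log (∑ z', p a z')) a))‖
      ≤ 2 * Real.sqrt (G * M) := by
  intro z a
  have hp : ∀ z', Differentiable ℝ (fun a => p a z') :=
    fun z' => (hdiff z').differentiable two_ne_zero
  have hlogp : Differentiable ℝ (fun a => Real.log (p a z)) := (hp z).log fun a => (hpos a z).ne'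
  have hlogS : Differentiable ℝ (fun a => Real.log (∑ z', p a z')) :=
    differentiable_log_sum_of_pos (fun z' _ => hp z') (fun z' _ a => hpos a z')
      ⟨z, Finset.mem_univ z⟩
  have hlogm : ∀ i, Differentiable ℝ
      (fun a => Real.log (∑ z' ∈ Finset.univ.filter (fun z'' => z'' i = z i), p a z')) :=
    fun i => differentiable_log_sum_of_pos (fun z' _ => hp z') (fun z' _ a => hpos a z')
      ⟨z, by simp⟩
  calc _ = ‖gradient (interactionLogRatio p z) a‖ := by
        rw [interactionLogRatio_eq_log_sub p hpos z,
          gradient_fun_sub ((hlogp a).fun_sub (hlogS a))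
            (DifferentiableAt.fun_sum fun i _ => (hlogm i a).fun_sub (hlogS a)),
          gradient_fun_sub (hlogp a) (hlogS a),
          gradient_fun_sum fun i _ => (hlogm i a).fun_sub (hlogS a), sub_sub]
        simp only [gradient_fun_sub (hlogm _ a) (hlogS a)]
    _ ≤ 2 * Real.sqrt (G * M) := by
        rw [norm_gradient]
        exact (hg2 z).norm_fderiv_le_two_mul_sqrt
          (fun x => (Real.norm_eq_abs _).trans_le (hgb z x)) (hHess z) a

theorem stmt16 {n K : ℕ} {Z : Fin K → Type*}
    [∀ i, Fintype (Z i)] [∀ i, DecidableEq (Z i)]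
    (p : EuclideanSpace ℝ (Fin n) → (∀ i, Z i) → ℝ)
    (hpos : ∀ a z, 0 < p a z)
    (hdiff : ∀ z, ContDiff ℝ 2 (fun a => p a z))
    (G M : ℝ) (hG : 0 ≤ G) (hM : 0 < M)
    (hg2 : ∀ z, ContDiff ℝ 2 (interactionLogRatio p z))
    (hgb : ∀ z a, |interactionLogRatio p z a| ≤ G)
    (hHess : ∀ z a, ‖iteratedFDeriv ℝ 2 (interactionLogRatio p z) a‖ ≤ M) :
    ∀ (z : ∀ i, Z i) (a : EuclideanSpace ℝ (Fin n)),
      ‖gradient (fun a => Real.log (p a z)) a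
        - (gradient (fun a => Real.log (∑ z', p a z')) a
           + ∑ i, (gradient (fun a =>
                Real.log (∑ z' ∈ Finset.univ.filter (fun z'' => z'' i = z i),
                  p a z')) a
              - gradient (fun a => Real.log (∑ z', p a z')) a))‖
      ≤ 2 * Real.sqrt (G * M) :=
  stmt16_general p hpos hdiff G M hg2 hgb hHess
end
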